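/- For every positive integer n: the complete graphs K_{4n} and K_{4n+3} admit adapted complex structures, and the graphs (K_{4n+1})_* and (K_{4n+2})_* (the complete graphs K_{4n+1} and K_{4n+2} with one extra isolated vertex added) admit adapted complex structures. -/

import Mathlib

/-!  Framework: the 2-step nilpotent Lie algebra `𝔫_G` associated to a finite simple
graph `G` (Dani–Mainkar construction), and adapted complex structures on it. -/

open scoped BigOperators

namespace GraphLie

variable {V : Type*} [Fintype V] [LinearOrder V]

/-- The underlying real vector space of the Lie algebra `𝔫_G` associated to a graph `G`:
real-valued functions on its basis `V ⊕ G.edgeSet` (vertices and edges). -/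
abbrev Niln (G : SimpleGraph V) : Type _ := (V ⊕ G.edgeSet) → ℝ

variable (G : SimpleGraph V) [DecidableRel G.Adj]

/-- The basis vector of `𝔫_G` corresponding to the vertex `v`. -/
noncomputable def vtx (v : V) : Niln G := Pi.single (Sum.inl v) 1

/-- The basis vector of `𝔫_G` corresponding to the edge `e`. -/
noncomputable def edg (e : G.edgeSet) : Niln G := Pi.single (Sum.inr e) 1

/-- The basis vector of `𝔫_G` corresponding to a vertex or an edge. -/
noncomputable def basisVec (b : V ⊕ G.edgeSet) : Niln G := Pi.single b 1

/-- The bracket of two vertex generators: for adjacent vertices `i < j` (with respect to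
the chosen labeling of the vertices) `[v_i, v_j] = e_{i,j}` and `[v_j, v_i] = -e_{i,j}`;
non-adjacent vertices commute. -/
noncomputable def bracketVtx (i j : V) : Niln G :=
  if h : G.Adj i j then
    (if i < j then edg G ⟨s(i, j), G.mem_edgeSet.mpr h⟩
     else - edg G ⟨s(i, j), G.mem_edgeSet.mpr h⟩)
  else 0

/-- The Lie bracket of `𝔫_G`, extended bilinearly from the generators; all the
edge generators are central. -/
noncomputable def bracket (x y : Niln G) : Niln G :=
  ∑ i : V, ∑ j : V, (x (Sum.inl i) * y (Sum.inl j)) • bracketVtx G i j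

/-- An adapted complex structure on the graph `G`: a linear endomorphism `J` of `𝔫_G`
with `J ∘ J = -id`, whose Nijenhuis tensor vanishes, and which sends each basis vector
(vertex or edge) to plus or minus a basis vector. -/
structure AdaptedCS : Type _ where
  J : Niln G →ₗ[ℝ] Niln G
  j_squared : ∀ x, J (J x) = -x
  integrable : ∀ x y,
    bracket G x y + J (bracket G (J x) y + bracket G x (J y)) - bracket G (J x) (J y) = 0
  adapted : ∀ b : V ⊕ G.edgeSet,
    (∃ b', J (basisVec G b) = basisVec G b') ∨ (∃ b', J (basisVec G b) = - basisVec G b')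

variable {G}

/-- An edge of `G` joining vertices `v` and `w` is distinguished if `Jv = w` or `Jw = v`. -/
def AdaptedCS.Distinguished (Jc : AdaptedCS G) (e : G.edgeSet) : Prop :=
  ∃ v w : V, (e : Sym2 V) = s(v, w) ∧
    (Jc.J (vtx G v) = vtx G w ∨ Jc.J (vtx G w) = vtx G v)

end GraphLie

/-- The complete graph `K_m` together with one extra isolated vertex, modelled on
`Fin (m + 1)`: the first `m` vertices are pairwise adjacent, and the last vertex is
isolated. -/
def completeStar (m : ℕ) : SimpleGraph (Fin (m + 1)) where
  Adj i j := i ≠ j ∧ (i : ℕ) < m ∧ (j : ℕ) < m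
  symm := by
    constructor
    intro i j h
    exact ⟨h.1.symm, h.2.2, h.2.1⟩
  loopless := ⟨fun i h => h.1 rfl⟩

instance (m : ℕ) : DecidableRel (completeStar m).Adj := fun i j =>
  inferInstanceAs (Decidable (i ≠ j ∧ (i : ℕ) < m ∧ (j : ℕ) < m))


namespace GraphLie

variable {V : Type*} [Fintype V] [LinearOrder V]
variable (G : SimpleGraph V) [DecidableRel G.Adj]

-- basic lemmas

lemma bracket_add_left (x x' y : Niln G) :
    bracket G (x + x') y = bracket G x y + bracket G x' y := by
  unfold bracket
  rw [← Finset.sum_add_distrib]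
  refine Finset.sum_congr rfl fun i _ => ?_
  rw [← Finset.sum_add_distrib]
  refine Finset.sum_congr rfl fun j _ => ?_
  simp [add_mul, add_smul]

lemma bracket_add_right (x y y' : Niln G) :
    bracket G x (y + y') = bracket G x y + bracket G x y' := by
  unfold bracket
  rw [← Finset.sum_add_distrib]
  refine Finset.sum_congr rfl fun i _ => ?_
  rw [← Finset.sum_add_distrib]
  refine Finset.sum_congr rfl fun j _ => ?_
  simp [mul_add, add_smul]

lemma bracket_smul_left (c : ℝ) (x y : Niln G) :
    bracket G (c • x) y = c • bracket G x y := by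
  unfold bracket
  rw [Finset.smul_sum]
  refine Finset.sum_congr rfl fun i _ => ?_
  rw [Finset.smul_sum]
  refine Finset.sum_congr rfl fun j _ => ?_
  simp [mul_smul, mul_assoc]

lemma bracket_smul_right (c : ℝ) (x y : Niln G) :
    bracket G x (c • y) = c • bracket G x y := by
  unfold bracket
  rw [Finset.smul_sum]
  refine Finset.sum_congr rfl fun i _ => ?_
  rw [Finset.smul_sum]
  refine Finset.sum_congr rfl fun j _ => ?_
  simp only [Pi.smul_apply, smul_eq_mul, ← mul_smul]
  ring_nf

/-- `bracket` as a bilinear map. -/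
noncomputable def bracketL : Niln G →ₗ[ℝ] Niln G →ₗ[ℝ] Niln G :=
  LinearMap.mk₂ ℝ (bracket G) (bracket_add_left G) (bracket_smul_left G)
    (bracket_add_right G) (bracket_smul_right G)

@[simp] lemma bracketL_apply (x y : Niln G) : bracketL G x y = bracket G x y := rfl

lemma bracketVtx_antisymm (i j : V) : bracketVtx G j i = - bracketVtx G i j := by
  unfold bracketVtx
  by_cases h : G.Adj i j
  · have h' : G.Adj j i := h.symm
    rw [dif_pos h, dif_pos h']
    have hne : i ≠ j := h.ne
    have hs : s(j, i) = s(i, j) := Sym2.eq_swap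
    rcases lt_or_gt_of_ne hne with hlt | hgt
    · rw [if_pos hlt, if_neg (not_lt.mpr hlt.le)]
      congr 1 <;> simp [hs]
    · rw [if_pos hgt, if_neg (not_lt.mpr hgt.le)]
      simp only [neg_neg]
      congr 1 <;> simp [hs]
  · rw [dif_neg h, dif_neg (fun h' => h h'.symm), neg_zero]

lemma bracket_antisymm (x y : Niln G) : bracket G y x = - bracket G x y := by
  unfold bracket
  rw [Finset.sum_comm, ← Finset.sum_neg_distrib]
  refine Finset.sum_congr rfl fun i _ => ?_
  rw [← Finset.sum_neg_distrib]
  refine Finset.sum_congr rfl fun j _ => ?_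
  rw [bracketVtx_antisymm, mul_comm, smul_neg]

lemma bracket_vtx_vtx (i j : V) : bracket G (vtx G i) (vtx G j) = bracketVtx G i j := by
  unfold bracket vtx
  rw [Finset.sum_eq_single i]
  · rw [Finset.sum_eq_single j]
    · simp
    · intro j' _ hj'
      simp [Pi.single_apply, hj']
    · simp
  · intro i' _ hi'
    apply Finset.sum_eq_zero
    intro j' _
    simp [Pi.single_apply, hi']
  · simp

lemma bracket_edg_left (e : G.edgeSet) (y : Niln G) : bracket G (edg G e) y = 0 := by
  unfold bracket edg
  apply Finset.sum_eq_zero; intro i _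
  apply Finset.sum_eq_zero; intro j _
  simp [Pi.single_apply]

lemma bracket_edg_right (e : G.edgeSet) (x : Niln G) : bracket G x (edg G e) = 0 := by
  rw [bracket_antisymm, bracket_edg_left, neg_zero]

/-- Reduce integrability to basis vectors. -/
lemma integrable_of_basis (J : Niln G →ₗ[ℝ] Niln G)
    (h : ∀ b b' : V ⊕ G.edgeSet,
      bracket G (basisVec G b) (basisVec G b')
        + J (bracket G (J (basisVec G b)) (basisVec G b')
            + bracket G (basisVec G b) (J (basisVec G b')))
        - bracket G (J (basisVec G b)) (J (basisVec G b')) = 0) :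
    ∀ x y, bracket G x y + J (bracket G (J x) y + bracket G x (J y))
      - bracket G (J x) (J y) = 0 := by
  classical
  let N : Niln G → Niln G → Niln G := fun x y =>
    bracketL G x y + J (bracketL G (J x) y + bracketL G x (J y)) - bracketL G (J x) (J y)
  have hadd₁ : ∀ x x' y, N (x + x') y = N x y + N x' y := by
    intro x x' y
    simp only [N, map_add, LinearMap.add_apply, LinearMap.map_add]
    abel
  have hsmul₁ : ∀ (c : ℝ) x y, N (c • x) y = c • N x y := by
    intro c x y
    simp only [N, map_smul, LinearMap.smul_apply, LinearMap.map_smul, ← smul_add, smul_sub]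
  have hadd₂ : ∀ x y y', N x (y + y') = N x y + N x y' := by
    intro x y y'
    simp only [N, map_add, LinearMap.map_add]
    abel
  have hsmul₂ : ∀ (c : ℝ) x y, N x (c • y) = c • N x y := by
    intro c x y
    simp only [N, map_smul, LinearMap.map_smul, ← smul_add, smul_sub]
  let NL : Niln G →ₗ[ℝ] Niln G →ₗ[ℝ] Niln G :=
    LinearMap.mk₂ ℝ N hadd₁ hsmul₁ hadd₂ hsmul₂
  have hNL : NL = 0 := by
    apply LinearMap.ext_basis (Pi.basisFun ℝ (V ⊕ G.edgeSet)) (Pi.basisFun ℝ (V ⊕ G.edgeSet))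
    intro b b'
    rw [Pi.basisFun_apply, Pi.basisFun_apply]
    show N (Pi.single b 1) (Pi.single b' 1) = (0 : Niln G →ₗ[ℝ] Niln G →ₗ[ℝ] Niln G) _ _
    simpa [N, basisVec] using h b b'
  intro x y
  have := congrFun (congrArg (fun F => (F x) y) hNL)
  simpa [NL, N] using DFunLike.congr_fun (DFunLike.congr_fun hNL x) y


section MkJ

variable (f : V ⊕ G.edgeSet → V ⊕ G.edgeSet) (σ : V ⊕ G.edgeSet → ℝ)

/-- The linear map determined by `basisVec b ↦ σ b • basisVec (f b)` for an involution `f`. -/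
noncomputable def mkJ : Niln G →ₗ[ℝ] Niln G where
  toFun x := fun b => σ (f b) * x (f b)
  map_add' x y := by funext b; simp [mul_add]
  map_smul' c x := by funext b; simp; ring

lemma mkJ_single (hf : ∀ b, f (f b) = b) (b : V ⊕ G.edgeSet) :
    mkJ G f σ (Pi.single b 1) = σ b • (Pi.single (f b) 1 : Niln G) := by
  funext d
  simp only [mkJ, LinearMap.coe_mk, AddHom.coe_mk, Pi.smul_apply, Pi.single_apply, smul_eq_mul]
  by_cases h : d = f b
  · rw [if_pos h, h, hf, if_pos rfl]
  · have h2 : f d ≠ b := fun hc => h (by rw [← hc, hf])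
    rw [if_neg h2, if_neg h, mul_zero, mul_zero]

lemma mkJ_basisVec (hf : ∀ b, f (f b) = b) (b : V ⊕ G.edgeSet) :
    mkJ G f σ (basisVec G b) = σ b • basisVec G (f b) := mkJ_single G f σ hf b

lemma mkJ_squared (hf : ∀ b, f (f b) = b) (hσ : ∀ b, σ b * σ (f b) = -1) (x : Niln G) :
    mkJ G f σ (mkJ G f σ x) = -x := by
  funext b
  simp only [mkJ, LinearMap.coe_mk, AddHom.coe_mk, Pi.neg_apply]
  rw [hf, ← mul_assoc]
  have : σ (f b) * σ b = -1 := by rw [mul_comm]; have := hσ b; exact this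
  rw [this]; ring

end MkJ

/-- The Nijenhuis expression vanishes on the diagonal. -/
lemma nijenhuis_diag (J : Niln G →ₗ[ℝ] Niln G) (x : Niln G) :
    bracket G x x + J (bracket G (J x) x + bracket G x (J x)) - bracket G (J x) (J x) = 0 := by
  have key : ∀ y : Niln G, bracket G y y = 0 := by
    intro y
    have h := bracket_antisymm G y y
    funext b
    have hb := congrFun h b
    simp only [Pi.neg_apply, Pi.zero_apply] at hb ⊢
    linarith
  have h2 : bracket G (J x) x + bracket G x (J x) = 0 := by
    rw [bracket_antisymm G x (J x)]; abel
  rw [key, key, h2, map_zero]; abel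


lemma bracket_neg_left (x y : Niln G) : bracket G (-x) y = -(bracket G x y) := by
  have h : (-x : Niln G) = (-1 : ℝ) • x := by funext b; simp
  rw [h, bracket_smul_left, neg_one_smul]

lemma bracket_neg_right (x y : Niln G) : bracket G x (-y) = -(bracket G x y) := by
  have h : (-y : Niln G) = (-1 : ℝ) • y := by funext b; simp
  rw [h, bracket_smul_right, neg_one_smul]

/-- The Nijenhuis expression is antisymmetric. -/
lemma nijenhuis_swap (J : Niln G →ₗ[ℝ] Niln G) (x y : Niln G)
    (h : bracket G x y + J (bracket G (J x) y + bracket G x (J y))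
      - bracket G (J x) (J y) = 0) :
    bracket G y x + J (bracket G (J y) x + bracket G y (J x))
      - bracket G (J y) (J x) = 0 := by
  rw [bracket_antisymm G x y, bracket_antisymm G x (J y), bracket_antisymm G (J x) y,
    bracket_antisymm G (J x) (J y)]
  have hB : -bracket G x (J y) + -bracket G (J x) y
      = -(bracket G (J x) y + bracket G x (J y)) := by abel
  rw [hB, map_neg]
  have h3 : -(bracket G x y + J (bracket G (J x) y + bracket G x (J y))
      - bracket G (J x) (J y)) = 0 := by rw [h, neg_zero]
  rw [← h3]
  abel

/-! ### The concrete construction -/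

/-- Parity toggle. -/
def τ (x : ℕ) : ℕ := if x % 2 = 0 then x + 1 else x - 1

/-- Parity sign. -/
noncomputable def σv (x : ℕ) : ℝ := if x % 2 = 0 then 1 else -1

lemma tau_cases (x : ℕ) : (x % 2 = 0 ∧ τ x = x + 1) ∨ (x % 2 = 1 ∧ τ x = x - 1) := by
  unfold τ
  by_cases h : x % 2 = 0
  · exact Or.inl ⟨h, if_pos h⟩
  · exact Or.inr ⟨by omega, if_neg h⟩

lemma sigv_mul_tau (x : ℕ) : σv x * σv (τ x) = -1 := by
  unfold σv
  rcases tau_cases x with ⟨h, e⟩ | ⟨h, e⟩ <;> rw [e] <;> split_ifs <;>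
    (first | (exfalso; omega) | ring)

lemma sigv_pm (x : ℕ) : σv x = 1 ∨ σv x = -1 := by
  unfold σv; split_ifs <;> simp

/-- Context for the construction: a graph on `Fin M` which is a clique on the first `c`
vertices (plus at most one isolated vertex), with `q` vertex pairs and `r` paired
pair-edges. -/
structure Ctx where
  M : ℕ
  c : ℕ
  q : ℕ
  r : ℕ
  G : SimpleGraph (Fin M)
  dec : DecidableRel G.Adj
  hadj : ∀ i j : Fin M, G.Adj i j ↔ i ≠ j ∧ (i : ℕ) < c ∧ (j : ℕ) < c
  hcM : c ≤ M
  hMc : M ≤ c + 1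
  hq : c = 2 * q + c % 2
  hr : q = r + c % 2 + (M - c)
  hre : r % 2 = 0

instance (C : Ctx) : DecidableRel C.G.Adj := C.dec

namespace Ctx

variable (C : Ctx)

/-- The edge of the clique joining `i < j`. -/
def mkE (i j : ℕ) (hij : i < j) (hj : j < C.c) : C.G.edgeSet :=
  ⟨s(⟨i, by have := C.hcM; omega⟩, ⟨j, by have := C.hcM; omega⟩),
    C.G.mem_edgeSet.mp (by
      rw [SimpleGraph.mem_edgeSet, C.hadj]
      refine ⟨?_, by simpa using lt_trans hij hj, by simpa using hj⟩
      intro h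
      have := congrArg Fin.val h
      simp at this
      omega) |> fun h => h⟩

def elo (S : Sym2 (Fin C.M)) : ℕ := Sym2.lift ⟨fun a b => min a.1 b.1, fun _ _ => min_comm _ _⟩ S
def ehi (S : Sym2 (Fin C.M)) : ℕ := Sym2.lift ⟨fun a b => max a.1 b.1, fun _ _ => max_comm _ _⟩ S

@[simp] lemma elo_mk (a b : Fin C.M) : C.elo s(a, b) = min a.1 b.1 := rfl
@[simp] lemma ehi_mk (a b : Fin C.M) : C.ehi s(a, b) = max a.1 b.1 := rfl

lemma elo_mkE (i j : ℕ) (hij : i < j) (hj : j < C.c) :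
    C.elo (C.mkE i j hij hj).1 = i := by
  show min i j = i
  omega

lemma ehi_mkE (i j : ℕ) (hij : i < j) (hj : j < C.c) :
    C.ehi (C.mkE i j hij hj).1 = j := by
  show max i j = j
  omega

lemma edge_bound (e : C.G.edgeSet) : C.elo e.1 < C.ehi e.1 ∧ C.ehi e.1 < C.c := by
  obtain ⟨S, hS⟩ := e
  induction S using Sym2.ind with
  | _ a b =>
    have h := (C.hadj a b).mp (C.G.mem_edgeSet.mp hS)
    have hne : a.1 ≠ b.1 := fun hv => h.1 (Fin.ext hv)
    have h2 := h.2.1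
    have h3 := h.2.2
    simp only [elo_mk, ehi_mk]
    omega

lemma edge_repr (e : C.G.edgeSet) :
    e = C.mkE (C.elo e.1) (C.ehi e.1) (C.edge_bound e).1 (C.edge_bound e).2 := by
  apply Subtype.ext
  obtain ⟨S, hS⟩ := e
  induction S using Sym2.ind with
  | _ a b =>
    show s(a, b) = _
    simp only [mkE]
    rw [Sym2.eq_iff]
    rcases le_or_gt a.1 b.1 with hab | hab
    · left
      constructor <;> (apply Fin.ext; simp; omega)
    · right
      constructor <;> (apply Fin.ext; simp; omega)


lemma mkE_congr {i j i' j' : ℕ} (hij : i < j) (hjc : j < C.c) (hij' : i' < j') (hjc' : j' < C.c)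
    (hi : i = i') (hj : j = j') : C.mkE i j hij hjc = C.mkE i' j' hij' hjc' := by
  subst hi; subst hj; rfl

/-- The basis involution. -/
noncomputable def ff : Fin C.M ⊕ C.G.edgeSet → Fin C.M ⊕ C.G.edgeSet
  | Sum.inl v =>
      if h : (v : ℕ) < 2 * C.q then
        Sum.inl ⟨τ (v : ℕ), by
          have h1 := C.hcM; have h2 := C.hq
          rcases tau_cases (v : ℕ) with ⟨h3, e3⟩ | ⟨h3, e3⟩ <;> omega⟩
      else if h2 : (v : ℕ) = C.c then
        Sum.inr (C.mkE (2 * C.r) (2 * C.r + 1) (by omega) (by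
          have h3 := v.isLt; have h4 := C.hMc; have h5 := C.hq; have h6 := C.hr; omega))
      else
        Sum.inr (C.mkE (2 * (C.q - 1)) (2 * (C.q - 1) + 1) (by omega) (by
          have h3 := v.isLt; have h4 := C.hMc; have h5 := C.hq; have h6 := C.hr; omega))
  | Sum.inr e =>
      if h : C.ehi e.1 < 2 * C.q ∧ C.ehi e.1 ≠ τ (C.elo e.1) then
        Sum.inr (C.mkE (C.elo e.1) (τ (C.ehi e.1))
          (by have hb := C.edge_bound e
              rcases tau_cases (C.ehi e.1) with ⟨h1, e1⟩ | ⟨h1, e1⟩ <;>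
              rcases tau_cases (C.elo e.1) with ⟨h2, e2⟩ | ⟨h2, e2⟩ <;> omega)
          (by have hb := C.edge_bound e; have h5 := C.hq
              rcases tau_cases (C.ehi e.1) with ⟨h1, e1⟩ | ⟨h1, e1⟩ <;> omega))
      else if h2 : C.ehi e.1 = 2 * C.q then
        Sum.inr (C.mkE (τ (C.elo e.1)) (C.ehi e.1)
          (by have hb := C.edge_bound e
              rcases tau_cases (C.elo e.1) with ⟨h1, e1⟩ | ⟨h1, e1⟩ <;> omega)
          (C.edge_bound e).2)
      else
        if h3 : C.elo e.1 / 2 < C.r then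
          Sum.inr (C.mkE (2 * τ (C.elo e.1 / 2)) (2 * τ (C.elo e.1 / 2) + 1) (by omega)
            (by have h5 := C.hq; have h6 := C.hre; have h7 := C.hr
                rcases tau_cases (C.elo e.1 / 2) with ⟨h1, e1⟩ | ⟨h1, e1⟩ <;> omega))
        else if h4 : C.M = C.c + 1 ∧ C.elo e.1 / 2 = C.r then
          Sum.inl ⟨C.c, by omega⟩
        else
          Sum.inl ⟨C.c - 1, by
            have hb := C.edge_bound e; have h5 := C.hcM; omega⟩

/-- The sign. -/
noncomputable def sg : Fin C.M ⊕ C.G.edgeSet → ℝ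
  | Sum.inl v => if (v : ℕ) < 2 * C.q then σv (v : ℕ) else 1
  | Sum.inr e =>
      if C.ehi e.1 < 2 * C.q ∧ C.ehi e.1 ≠ τ (C.elo e.1) then σv (C.ehi e.1)
      else if C.ehi e.1 = 2 * C.q then σv (C.elo e.1)
      else if C.elo e.1 / 2 < C.r then σv (C.elo e.1 / 2)
      else -1

lemma ff_vtx_paired (v : Fin C.M) (h : (v : ℕ) < 2 * C.q) (tv : Fin C.M)
    (htv : (tv : ℕ) = τ (v : ℕ)) :
    C.ff (Sum.inl v) = Sum.inl tv ∧ C.sg (Sum.inl v) = σv (v : ℕ) := by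
  constructor
  · simp only [ff]
    rw [dif_pos h]
    exact congrArg Sum.inl (Fin.ext htv.symm)
  · simp only [sg]
    rw [if_pos h]

lemma ff_vtx_t (v : Fin C.M) (hv : (v : ℕ) = C.c)
    (hij : 2 * C.r < 2 * C.r + 1) (hjc : 2 * C.r + 1 < C.c) :
    C.ff (Sum.inl v) = Sum.inr (C.mkE (2 * C.r) (2 * C.r + 1) hij hjc) ∧
    C.sg (Sum.inl v) = 1 := by
  have hq := C.hq
  have h1 : ¬ (v : ℕ) < 2 * C.q := by omega
  constructor
  · simp only [ff]
    rw [dif_neg h1, dif_pos hv]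
  · simp only [sg]
    rw [if_neg h1]

lemma ff_vtx_s (v : Fin C.M) (hv : (v : ℕ) = 2 * C.q) (hc : C.c % 2 = 1)
    (hij : 2 * (C.q - 1) < 2 * (C.q - 1) + 1) (hjc : 2 * (C.q - 1) + 1 < C.c) :
    C.ff (Sum.inl v) = Sum.inr (C.mkE (2 * (C.q - 1)) (2 * (C.q - 1) + 1) hij hjc) ∧
    C.sg (Sum.inl v) = 1 := by
  have hq := C.hq
  have h1 : ¬ (v : ℕ) < 2 * C.q := by omega
  have h2 : ¬ (v : ℕ) = C.c := by omega
  constructor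
  · simp only [ff]
    rw [dif_neg h1, dif_neg h2]
  · simp only [sg]
    rw [if_neg h1]

lemma ff_edge_cross (i j : ℕ) (hij : i < j) (hjc : j < C.c) (hjq : j < 2 * C.q)
    (hne : j ≠ τ i) (hij' : i < τ j) (hjc' : τ j < C.c) :
    C.ff (Sum.inr (C.mkE i j hij hjc)) = Sum.inr (C.mkE i (τ j) hij' hjc') ∧
    C.sg (Sum.inr (C.mkE i j hij hjc)) = σv j := by
  have h1 := C.elo_mkE i j hij hjc
  have h2 := C.ehi_mkE i j hij hjc
  have hcond : C.ehi (C.mkE i j hij hjc).1 < 2 * C.q ∧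
      C.ehi (C.mkE i j hij hjc).1 ≠ τ (C.elo (C.mkE i j hij hjc).1) := by
    rw [h1, h2]; exact ⟨hjq, hne⟩
  constructor
  · simp only [ff]
    rw [dif_pos hcond]
    exact congrArg Sum.inr (C.mkE_congr _ _ _ _ h1 (by rw [h2]))
  · simp only [sg]
    rw [if_pos hcond, h2]

lemma ff_edge_s (i j : ℕ) (hij : i < j) (hjc : j < C.c) (hjq : j = 2 * C.q)
    (hij' : τ i < j) :
    C.ff (Sum.inr (C.mkE i j hij hjc)) = Sum.inr (C.mkE (τ i) j hij' hjc) ∧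
    C.sg (Sum.inr (C.mkE i j hij hjc)) = σv i := by
  have h1 := C.elo_mkE i j hij hjc
  have h2 := C.ehi_mkE i j hij hjc
  have hcond : ¬ (C.ehi (C.mkE i j hij hjc).1 < 2 * C.q ∧
      C.ehi (C.mkE i j hij hjc).1 ≠ τ (C.elo (C.mkE i j hij hjc).1)) := by
    rw [h1, h2]; intro hcontra; omega
  have hcond2 : C.ehi (C.mkE i j hij hjc).1 = 2 * C.q := by rw [h2]; exact hjq
  constructor
  · simp only [ff]
    rw [dif_neg hcond, dif_pos hcond2]
    exact congrArg Sum.inr (C.mkE_congr _ _ _ _ (by rw [h1]) (by rw [h2, hjq]))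
  · simp only [sg]
    rw [if_neg hcond, if_pos hcond2, h1]

lemma pair_edge_conds (k : ℕ) (hij : 2 * k < 2 * k + 1) (hjc : 2 * k + 1 < C.c) :
    ¬ (C.ehi (C.mkE (2 * k) (2 * k + 1) hij hjc).1 < 2 * C.q ∧
       C.ehi (C.mkE (2 * k) (2 * k + 1) hij hjc).1 ≠ τ (C.elo (C.mkE (2 * k) (2 * k + 1) hij hjc).1)) ∧
    ¬ C.ehi (C.mkE (2 * k) (2 * k + 1) hij hjc).1 = 2 * C.q ∧
    C.elo (C.mkE (2 * k) (2 * k + 1) hij hjc).1 / 2 = k := by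
  have h1 := C.elo_mkE (2 * k) (2 * k + 1) hij hjc
  have h2 := C.ehi_mkE (2 * k) (2 * k + 1) hij hjc
  rw [h1, h2]
  refine ⟨?_, by omega, by omega⟩
  intro hcontra
  rcases tau_cases (2 * k) with ⟨h3, e3⟩ | ⟨h3, e3⟩ <;> omega

lemma ff_edge_pairk (k : ℕ) (hk : k < C.r) (hij : 2 * k < 2 * k + 1) (hjc : 2 * k + 1 < C.c)
    (hij' : 2 * τ k < 2 * τ k + 1) (hjc' : 2 * τ k + 1 < C.c) :
    C.ff (Sum.inr (C.mkE (2 * k) (2 * k + 1) hij hjc))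
      = Sum.inr (C.mkE (2 * τ k) (2 * τ k + 1) hij' hjc') ∧
    C.sg (Sum.inr (C.mkE (2 * k) (2 * k + 1) hij hjc)) = σv k := by
  obtain ⟨hc1, hc2, hc3⟩ := C.pair_edge_conds k hij hjc
  constructor
  · simp only [ff]
    rw [dif_neg hc1, dif_neg hc2, dif_pos (by rw [hc3]; exact hk)]
    exact congrArg Sum.inr (C.mkE_congr _ _ _ _ (by rw [hc3]) (by rw [hc3]))
  · simp only [sg]
    rw [if_neg hc1, if_neg hc2, if_pos (by rw [hc3]; exact hk), hc3]

lemma ff_edge_t (hM : C.M = C.c + 1) (hij : 2 * C.r < 2 * C.r + 1) (hjc : 2 * C.r + 1 < C.c)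
    (t : Fin C.M) (ht : (t : ℕ) = C.c) :
    C.ff (Sum.inr (C.mkE (2 * C.r) (2 * C.r + 1) hij hjc)) = Sum.inl t ∧
    C.sg (Sum.inr (C.mkE (2 * C.r) (2 * C.r + 1) hij hjc)) = -1 := by
  obtain ⟨hc1, hc2, hc3⟩ := C.pair_edge_conds C.r hij hjc
  constructor
  · simp only [ff]
    rw [dif_neg hc1, dif_neg hc2, dif_neg (by omega), dif_pos ⟨hM, hc3⟩]
    exact congrArg Sum.inl (Fin.ext (by simp [ht]))
  · simp only [sg]
    rw [if_neg hc1, if_neg hc2, if_neg (by omega)]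

lemma ff_edge_sslot (hc : C.c % 2 = 1) (hk : C.q - 1 ≥ C.r)
    (hij : 2 * (C.q - 1) < 2 * (C.q - 1) + 1) (hjc : 2 * (C.q - 1) + 1 < C.c)
    (sv : Fin C.M) (hs : (sv : ℕ) = 2 * C.q) (hkr : ¬ (C.M = C.c + 1 ∧ C.q - 1 = C.r)) :
    C.ff (Sum.inr (C.mkE (2 * (C.q - 1)) (2 * (C.q - 1) + 1) hij hjc)) = Sum.inl sv ∧
    C.sg (Sum.inr (C.mkE (2 * (C.q - 1)) (2 * (C.q - 1) + 1) hij hjc)) = -1 := by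
  obtain ⟨hc1, hc2, hc3⟩ := C.pair_edge_conds (C.q - 1) hij hjc
  have hq := C.hq
  constructor
  · simp only [ff]
    rw [dif_neg hc1, dif_neg hc2, dif_neg (by omega), dif_neg (by rw [hc3]; exact hkr)]
    exact congrArg Sum.inl (Fin.ext (by simp [hs]; omega))
  · simp only [sg]
    rw [if_neg hc1, if_neg hc2, if_neg (by omega)]

lemma tau_invol (x : ℕ) : τ (τ x) = x := by
  rcases tau_cases x with ⟨h, e⟩ | ⟨h, e⟩ <;> rw [e] <;>
    rcases tau_cases (x + 1) with ⟨h2, e2⟩ | ⟨h2, e2⟩ <;>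
    rcases tau_cases (x - 1) with ⟨h3, e3⟩ | ⟨h3, e3⟩ <;> omega

lemma vtx_cases (v : Fin C.M) :
    (v : ℕ) < 2 * C.q ∨ ((v : ℕ) = 2 * C.q ∧ C.c % 2 = 1) ∨ ((v : ℕ) = C.c ∧ C.M = C.c + 1) := by
  have h1 := v.isLt
  have h2 := C.hq
  have h3 := C.hMc
  have h4 := C.hcM
  omega

lemma edge_cases (e : C.G.edgeSet) :
    ∃ (i j : ℕ) (hij : i < j) (hjc : j < C.c), e = C.mkE i j hij hjc :=
  ⟨_, _, _, _, C.edge_repr e⟩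

set_option maxHeartbeats 1000000 in
lemma invol_data (b : Fin C.M ⊕ C.G.edgeSet) :
    C.ff (C.ff b) = b ∧ C.sg b * C.sg (C.ff b) = -1 := by
  have hq := C.hq
  have hr := C.hr
  have hre := C.hre
  have hMc := C.hMc
  have hcM := C.hcM
  rcases b with v | e
  · -- vertices
    rcases C.vtx_cases v with hv | ⟨hv, hc⟩ | ⟨hv, hM⟩
    · -- paired vertex
      have htv : τ (v : ℕ) < 2 * C.q := by
        rcases tau_cases (v : ℕ) with ⟨h3, e3⟩ | ⟨h3, e3⟩ <;> omega
      set tv : Fin C.M := ⟨τ (v : ℕ), by omega⟩ with htv_def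
      obtain ⟨hf1, hs1⟩ := C.ff_vtx_paired v hv tv rfl
      obtain ⟨hf2, hs2⟩ := C.ff_vtx_paired tv (by exact htv) v (by simp [htv_def, tau_invol])
      rw [hf1, hf2, hs1, hs2]
      exact ⟨rfl, sigv_mul_tau _⟩
    · -- the vertex s
      have hb1 : 2 * (C.q - 1) < 2 * (C.q - 1) + 1 := by omega
      have hb2 : 2 * (C.q - 1) + 1 < C.c := by omega
      obtain ⟨hf1, hs1⟩ := C.ff_vtx_s v hv hc hb1 hb2
      obtain ⟨hf2, hs2⟩ := C.ff_edge_sslot hc (by omega) hb1 hb2 v hv (by omega)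
      rw [hf1, hf2, hs1, hs2]
      exact ⟨rfl, by ring⟩
    · -- the vertex t
      have hb1 : 2 * C.r < 2 * C.r + 1 := by omega
      have hb2 : 2 * C.r + 1 < C.c := by omega
      obtain ⟨hf1, hs1⟩ := C.ff_vtx_t v hv hb1 hb2
      obtain ⟨hf2, hs2⟩ := C.ff_edge_t hM hb1 hb2 v hv
      rw [hf1, hf2, hs1, hs2]
      exact ⟨rfl, by ring⟩
  · -- edges
    obtain ⟨i, j, hij, hjc, he⟩ := C.edge_cases e
    by_cases hA : j < 2 * C.q ∧ j ≠ τ i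
    · -- cross edge
      have hij' : i < τ j := by
        rcases tau_cases j with ⟨h1, e1⟩ | ⟨h1, e1⟩ <;>
        rcases tau_cases i with ⟨h2, e2⟩ | ⟨h2, e2⟩ <;> omega
      have hjc' : τ j < C.c := by
        rcases tau_cases j with ⟨h1, e1⟩ | ⟨h1, e1⟩ <;> omega
      obtain ⟨hf1, hs1⟩ := C.ff_edge_cross i j hij hjc hA.1 hA.2 hij' hjc'
      have hjq2 : τ j < 2 * C.q := by
        rcases tau_cases j with ⟨h1, e1⟩ | ⟨h1, e1⟩ <;> omega
      have hne2 : τ j ≠ τ i := fun hcontra => by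
        have h9 : j = i := by
          have := congrArg τ hcontra; rwa [tau_invol, tau_invol] at this
        omega
      obtain ⟨hf2, hs2⟩ := C.ff_edge_cross i (τ j) hij' hjc' hjq2 hne2
        (by rw [tau_invol]; exact hij) (by rw [tau_invol]; exact hjc)
      rw [he, hf1, hf2, hs1, hs2]
      exact ⟨congrArg Sum.inr (C.mkE_congr _ _ _ _ rfl (tau_invol j)), sigv_mul_tau _⟩
    · by_cases hB : j = 2 * C.q
      · -- edge touching s
        have hij' : τ i < j := by
          rcases tau_cases i with ⟨h1, e1⟩ | ⟨h1, e1⟩ <;> omega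
        obtain ⟨hf1, hs1⟩ := C.ff_edge_s i j hij hjc hB hij'
        obtain ⟨hf2, hs2⟩ := C.ff_edge_s (τ i) j hij' hjc hB (by rw [tau_invol]; exact hij)
        rw [he, hf1, hf2, hs1, hs2]
        exact ⟨congrArg Sum.inr (C.mkE_congr _ _ _ _ (tau_invol i) rfl), sigv_mul_tau _⟩
      · -- within-pair edge
        have hji : j = i + 1 ∧ i % 2 = 0 := by
          rcases tau_cases i with ⟨h1, e1⟩ | ⟨h1, e1⟩ <;> omega
        set k := i / 2 with hk_def
        have hi2k : i = 2 * k := by omega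
        have hj2k : j = 2 * k + 1 := by omega
        have hb1 : 2 * k < 2 * k + 1 := by omega
        have hb2 : 2 * k + 1 < C.c := by omega
        have he2 : e = C.mkE (2 * k) (2 * k + 1) hb1 hb2 :=
          he.trans (C.mkE_congr _ _ _ _ hi2k hj2k)
        have hkq : k ≤ C.q - 1 := by omega
        by_cases hC : k < C.r
        · -- paired pair-edge
          have hb1' : 2 * τ k < 2 * τ k + 1 := by omega
          have hb2' : 2 * τ k + 1 < C.c := by
            rcases tau_cases k with ⟨h1, e1⟩ | ⟨h1, e1⟩ <;> omega
          obtain ⟨hf1, hs1⟩ := C.ff_edge_pairk k hC hb1 hb2 hb1' hb2'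
          have hC2 : τ k < C.r := by
            rcases tau_cases k with ⟨h1, e1⟩ | ⟨h1, e1⟩ <;> omega
          obtain ⟨hf2, hs2⟩ := C.ff_edge_pairk (τ k) hC2 hb1' hb2'
            (by rw [tau_invol]; exact hb1) (by rw [tau_invol]; exact hb2)
          rw [he2, hf1, hf2, hs1, hs2]
          exact ⟨congrArg Sum.inr (C.mkE_congr _ _ _ _
            (by rw [tau_invol]) (by rw [tau_invol])), sigv_mul_tau _⟩
        · by_cases hD : C.M = C.c + 1 ∧ k = C.r
          · -- the pair-edge matched with t
            have hbr1 : 2 * C.r < 2 * C.r + 1 := by omega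
            have hbr2 : 2 * C.r + 1 < C.c := by omega
            have hcc : C.c < C.M := by omega
            have htv : ((⟨C.c, hcc⟩ : Fin C.M) : ℕ) = C.c := rfl
            have he3 : e = C.mkE (2 * C.r) (2 * C.r + 1) hbr1 hbr2 :=
              he2.trans (C.mkE_congr _ _ _ _ (by omega) (by omega))
            obtain ⟨hf1, hs1⟩ := C.ff_edge_t hD.1 hbr1 hbr2 (⟨C.c, hcc⟩ : Fin C.M) htv
            obtain ⟨hf2, hs2⟩ := C.ff_vtx_t (⟨C.c, hcc⟩ : Fin C.M) htv hbr1 hbr2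
            rw [he3]; rw [hf1]; rw [hf2]; rw [hs1]; rw [hs2]
            exact ⟨rfl, by ring⟩
          · -- the pair-edge matched with s
            have hodd : C.c % 2 = 1 ∧ k = C.q - 1 := by omega
            have hbr1 : 2 * (C.q - 1) < 2 * (C.q - 1) + 1 := by omega
            have hbr2 : 2 * (C.q - 1) + 1 < C.c := by omega
            have hcc : 2 * C.q < C.M := by omega
            have hsv : ((⟨2 * C.q, hcc⟩ : Fin C.M) : ℕ) = 2 * C.q := rfl
            have he3 : e = C.mkE (2 * (C.q - 1)) (2 * (C.q - 1) + 1) hbr1 hbr2 :=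
              he2.trans (C.mkE_congr _ _ _ _ (by omega) (by omega))
            obtain ⟨hf1, hs1⟩ := C.ff_edge_sslot hodd.1 (by omega) hbr1 hbr2
              (⟨2 * C.q, hcc⟩ : Fin C.M) hsv (by omega)
            obtain ⟨hf2, hs2⟩ := C.ff_vtx_s (⟨2 * C.q, hcc⟩ : Fin C.M) hsv hodd.1 hbr1 hbr2
            rw [he3]; rw [hf1]; rw [hf2]; rw [hs1]; rw [hs2]
            exact ⟨rfl, by ring⟩

lemma ff_invol (b : Fin C.M ⊕ C.G.edgeSet) : C.ff (C.ff b) = b := (C.invol_data b).1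

lemma sg_mul (b : Fin C.M ⊕ C.G.edgeSet) : C.sg b * C.sg (C.ff b) = -1 := (C.invol_data b).2

lemma sg_pm (b : Fin C.M ⊕ C.G.edgeSet) : C.sg b = 1 ∨ C.sg b = -1 := by
  rcases b with v | e <;> simp only [sg] <;> split_ifs <;>
    first | exact sigv_pm _ | simp

/-- The complex structure. -/
noncomputable def Jmap : Niln C.G →ₗ[ℝ] Niln C.G := mkJ C.G C.ff C.sg

lemma Jmap_basis (b : Fin C.M ⊕ C.G.edgeSet) :
    C.Jmap (basisVec C.G b) = C.sg b • basisVec C.G (C.ff b) :=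
  mkJ_basisVec C.G C.ff C.sg C.ff_invol b

lemma Jvtx_paired (v tv : Fin C.M) (hv : (v : ℕ) < 2 * C.q) (htv : (tv : ℕ) = τ (v : ℕ)) :
    C.Jmap (vtx C.G v) = σv (v : ℕ) • vtx C.G tv := by
  obtain ⟨hf, hs⟩ := C.ff_vtx_paired v hv tv htv
  have h := C.Jmap_basis (Sum.inl v)
  rw [hf, hs] at h
  exact h

lemma Jvtx_t (v : Fin C.M) (hv : (v : ℕ) = C.c)
    (hij : 2 * C.r < 2 * C.r + 1) (hjc : 2 * C.r + 1 < C.c) :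
    C.Jmap (vtx C.G v) = edg C.G (C.mkE (2 * C.r) (2 * C.r + 1) hij hjc) := by
  obtain ⟨hf, hs⟩ := C.ff_vtx_t v hv hij hjc
  have h := C.Jmap_basis (Sum.inl v)
  rw [hf, hs, one_smul] at h
  exact h

lemma Jvtx_s (v : Fin C.M) (hv : (v : ℕ) = 2 * C.q) (hc : C.c % 2 = 1)
    (hij : 2 * (C.q - 1) < 2 * (C.q - 1) + 1) (hjc : 2 * (C.q - 1) + 1 < C.c) :
    C.Jmap (vtx C.G v) = edg C.G (C.mkE (2 * (C.q - 1)) (2 * (C.q - 1) + 1) hij hjc) := by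
  obtain ⟨hf, hs⟩ := C.ff_vtx_s v hv hc hij hjc
  have h := C.Jmap_basis (Sum.inl v)
  rw [hf, hs, one_smul] at h
  exact h

lemma Jedg_cross (i j : ℕ) (hij : i < j) (hjc : j < C.c) (hjq : j < 2 * C.q)
    (hne : j ≠ τ i) (hij' : i < τ j) (hjc' : τ j < C.c) :
    C.Jmap (edg C.G (C.mkE i j hij hjc)) = σv j • edg C.G (C.mkE i (τ j) hij' hjc') := by
  obtain ⟨hf, hs⟩ := C.ff_edge_cross i j hij hjc hjq hne hij' hjc'
  have h := C.Jmap_basis (Sum.inr (C.mkE i j hij hjc))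
  rw [hf, hs] at h
  exact h

lemma Jedg_s (i j : ℕ) (hij : i < j) (hjc : j < C.c) (hjq : j = 2 * C.q) (hij' : τ i < j) :
    C.Jmap (edg C.G (C.mkE i j hij hjc)) = σv i • edg C.G (C.mkE (τ i) j hij' hjc) := by
  obtain ⟨hf, hs⟩ := C.ff_edge_s i j hij hjc hjq hij'
  have h := C.Jmap_basis (Sum.inr (C.mkE i j hij hjc))
  rw [hf, hs] at h
  exact h

lemma bracketVtx_eq (v w : Fin C.M) (hvw : (v : ℕ) < (w : ℕ)) (hw : (w : ℕ) < C.c) :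
    bracketVtx C.G v w = edg C.G (C.mkE (v : ℕ) (w : ℕ) hvw hw) := by
  have hA : C.G.Adj v w := (C.hadj v w).mpr
    ⟨fun h => by rw [h] at hvw; omega, by omega, hw⟩
  unfold bracketVtx
  rw [dif_pos hA, if_pos (Fin.lt_def.mpr hvw)]
  exact congrArg (edg C.G) (Subtype.ext rfl)

lemma bracketVtx_zero (v w : Fin C.M) (h : ¬ C.G.Adj v w) : bracketVtx C.G v w = 0 := by
  unfold bracketVtx
  rw [dif_neg h]

lemma bracketVtx_self (v : Fin C.M) : bracketVtx C.G v v = 0 :=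
  C.bracketVtx_zero v v (C.G.irrefl)

lemma bracketVtx_t_right (v w : Fin C.M) (hw : (w : ℕ) = C.c) : bracketVtx C.G v w = 0 :=
  C.bracketVtx_zero v w (fun h => by have := ((C.hadj v w).mp h).2.2; omega)

lemma bracketVtx_t_left (v w : Fin C.M) (hv : (v : ℕ) = C.c) : bracketVtx C.G v w = 0 :=
  C.bracketVtx_zero v w (fun h => by have := ((C.hadj v w).mp h).2.1; omega)

/-- Key conjugation identity for two paired vertices in different pairs. -/
lemma key_cross (v w tw : Fin C.M) (hv : (v : ℕ) < 2 * C.q) (hw : (w : ℕ) < 2 * C.q)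
    (hvw : (v : ℕ) / 2 < (w : ℕ) / 2) (htw : (tw : ℕ) = τ (w : ℕ)) :
    C.Jmap (bracketVtx C.G v w) = σv (w : ℕ) • bracketVtx C.G v tw := by
  have hq := C.hq
  have hvw' : (v : ℕ) < (w : ℕ) := by omega
  have hwc : (w : ℕ) < C.c := by omega
  have hne : (w : ℕ) ≠ τ (v : ℕ) := by
    rcases tau_cases (v : ℕ) with ⟨h1, e1⟩ | ⟨h1, e1⟩ <;> omega
  have hij' : (v : ℕ) < τ (w : ℕ) := by
    rcases tau_cases (w : ℕ) with ⟨h1, e1⟩ | ⟨h1, e1⟩ <;>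
    rcases tau_cases (v : ℕ) with ⟨h2, e2⟩ | ⟨h2, e2⟩ <;> omega
  have hjc' : τ (w : ℕ) < C.c := by
    rcases tau_cases (w : ℕ) with ⟨h1, e1⟩ | ⟨h1, e1⟩ <;> omega
  rw [C.bracketVtx_eq v w hvw' hwc, C.Jedg_cross (v : ℕ) (w : ℕ) hvw' hwc hw hne hij' hjc',
    C.bracketVtx_eq v tw (by omega) (by omega)]
  exact congrArg (fun z => σv (w : ℕ) • edg C.G z) (C.mkE_congr _ _ _ _ rfl htw.symm)

/-- Key conjugation identity for a paired vertex and the special vertex `s`. -/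
lemma key_s (v tv sv : Fin C.M) (hv : (v : ℕ) < 2 * C.q) (hsv : (sv : ℕ) = 2 * C.q)
    (hcodd : C.c % 2 = 1) (htv : (tv : ℕ) = τ (v : ℕ)) :
    C.Jmap (bracketVtx C.G v sv) = σv (v : ℕ) • bracketVtx C.G tv sv := by
  have hq := C.hq
  have hMc := C.hMc
  have hsvM := sv.isLt
  have hvw' : (v : ℕ) < (sv : ℕ) := by omega
  have hwc : (sv : ℕ) < C.c := by omega
  have htvq : τ (v : ℕ) < 2 * C.q := by
    rcases tau_cases (v : ℕ) with ⟨h1, e1⟩ | ⟨h1, e1⟩ <;> omega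
  have h5 : τ (v : ℕ) < (sv : ℕ) := by omega
  have h6 : (sv : ℕ) = 2 * C.q := hsv
  have h7 : (tv : ℕ) < (sv : ℕ) := by omega
  rw [C.bracketVtx_eq v sv hvw' hwc,
    C.Jedg_s (v : ℕ) (sv : ℕ) hvw' hwc h6 h5,
    C.bracketVtx_eq tv sv h7 hwc]
  exact congrArg (fun z => σv (v : ℕ) • edg C.G z) (C.mkE_congr _ _ _ _ htv.symm rfl)

/-- The image of any vertex basis element under `Jmap`. -/
lemma Jvtx_shape (w : Fin C.M) :
    (∃ tw : Fin C.M, (tw : ℕ) = τ (w : ℕ) ∧ (tw : ℕ) < 2 * C.q ∧ (w : ℕ) < 2 * C.q ∧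
      C.Jmap (vtx C.G w) = σv (w : ℕ) • vtx C.G tw) ∨
    (∃ E : C.G.edgeSet, C.Jmap (vtx C.G w) = edg C.G E) := by
  have hq := C.hq
  have hr := C.hr
  have hcM := C.hcM
  have hMc2 := C.hMc
  rcases C.vtx_cases w with hw | ⟨hw, hc⟩ | ⟨hw, hM⟩
  · left
    have htwq : τ (w : ℕ) < 2 * C.q := by
      rcases tau_cases (w : ℕ) with ⟨h1, e1⟩ | ⟨h1, e1⟩ <;> omega
    have htwM : τ (w : ℕ) < C.M := by omega
    exact ⟨⟨τ (w : ℕ), htwM⟩, rfl, htwq, hw,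
      C.Jvtx_paired w ⟨τ (w : ℕ), htwM⟩ hw rfl⟩
  · right
    exact ⟨_, C.Jvtx_s w hw hc (by omega) (by omega)⟩
  · right
    exact ⟨_, C.Jvtx_t w hw (by omega) (by omega)⟩

/-- The image of any edge basis element under `Jmap`: either an edge, or (minus) the
special vertex `s` or `t`. -/
lemma Jedg_shape (e : C.G.edgeSet) :
    (∃ (a : ℝ) (e' : C.G.edgeSet), C.Jmap (edg C.G e) = a • edg C.G e') ∨
    (∃ u : Fin C.M, ((u : ℕ) = C.c ∨ ((u : ℕ) = 2 * C.q ∧ C.c % 2 = 1)) ∧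
      C.Jmap (edg C.G e) = - vtx C.G u) := by
  have hq := C.hq
  have hr := C.hr
  have hre := C.hre
  have hMc := C.hMc
  have hcM := C.hcM
  have h := C.Jmap_basis (Sum.inr e)
  obtain ⟨i, j, hij, hjc, he⟩ := C.edge_cases e
  by_cases hA : j < 2 * C.q ∧ j ≠ τ i
  · left
    have h1 : i < τ j := by
      rcases tau_cases j with ⟨h1, e1⟩ | ⟨h1, e1⟩ <;>
      rcases tau_cases i with ⟨h2, e2⟩ | ⟨h2, e2⟩ <;> omega
    have h2 : τ j < C.c := by
      rcases tau_cases j with ⟨h1, e1⟩ | ⟨h1, e1⟩ <;> omega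
    rw [he]
    exact ⟨_, _, C.Jedg_cross i j hij hjc hA.1 hA.2 h1 h2⟩
  · by_cases hB : j = 2 * C.q
    · left
      have h1 : τ i < j := by
        rcases tau_cases i with ⟨h1, e1⟩ | ⟨h1, e1⟩ <;> omega
      rw [he]
      exact ⟨_, _, C.Jedg_s i j hij hjc hB h1⟩
    · have hji : j = i + 1 ∧ i % 2 = 0 := by
        rcases tau_cases i with ⟨h1, e1⟩ | ⟨h1, e1⟩ <;> omega
      set k := i / 2 with hk_def
      have hb1 : 2 * k < 2 * k + 1 := by omega
      have hb2 : 2 * k + 1 < C.c := by omega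
      have he2 : e = C.mkE (2 * k) (2 * k + 1) hb1 hb2 :=
        he.trans (C.mkE_congr _ _ _ _ (by omega) (by omega))
      by_cases hC : k < C.r
      · left
        obtain ⟨hf, hs⟩ := C.ff_edge_pairk k hC hb1 hb2 (by omega)
          (by rcases tau_cases k with ⟨h1, e1⟩ | ⟨h1, e1⟩ <;> omega)
        have h2 := C.Jmap_basis (Sum.inr (C.mkE (2 * k) (2 * k + 1) hb1 hb2))
        rw [hf, hs] at h2
        rw [he2]
        exact ⟨_, _, h2⟩
      · by_cases hD : C.M = C.c + 1 ∧ k = C.r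
        · right
          have hcc : C.c < C.M := by omega
          have hbr1 : 2 * C.r < 2 * C.r + 1 := by omega
          have hbr2 : 2 * C.r + 1 < C.c := by omega
          have he3 : e = C.mkE (2 * C.r) (2 * C.r + 1) hbr1 hbr2 :=
            he2.trans (C.mkE_congr _ _ _ _ (by omega) (by omega))
          obtain ⟨hf, hs⟩ := C.ff_edge_t hD.1 hbr1 hbr2 (⟨C.c, hcc⟩ : Fin C.M) rfl
          refine ⟨⟨C.c, hcc⟩, Or.inl rfl, ?_⟩
          have h2 := C.Jmap_basis (Sum.inr (C.mkE (2 * C.r) (2 * C.r + 1) hbr1 hbr2))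
          rw [hf, hs, neg_one_smul] at h2
          rw [he3]
          exact h2
        · right
          have hodd : C.c % 2 = 1 ∧ k = C.q - 1 := by omega
          have hcc : 2 * C.q < C.M := by omega
          have hbr1 : 2 * (C.q - 1) < 2 * (C.q - 1) + 1 := by omega
          have hbr2 : 2 * (C.q - 1) + 1 < C.c := by omega
          have he3 : e = C.mkE (2 * (C.q - 1)) (2 * (C.q - 1) + 1) hbr1 hbr2 :=
            he2.trans (C.mkE_congr _ _ _ _ (by omega) (by omega))
          obtain ⟨hf, hs⟩ := C.ff_edge_sslot hodd.1 (by omega) hbr1 hbr2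
            (⟨2 * C.q, hcc⟩ : Fin C.M) rfl (by omega)
          refine ⟨⟨2 * C.q, hcc⟩, Or.inr ⟨rfl, hodd.1⟩, ?_⟩
          have h2 := C.Jmap_basis (Sum.inr (C.mkE (2 * (C.q - 1)) (2 * (C.q - 1) + 1) hbr1 hbr2))
          rw [hf, hs, neg_one_smul] at h2
          rw [he3]
          exact h2

section Nij

/-- Shorthand for the Nijenhuis expression. -/
noncomputable def NX (x y : Niln C.G) : Niln C.G :=
  bracket C.G x y + C.Jmap (bracket C.G (C.Jmap x) y + bracket C.G x (C.Jmap y))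
    - bracket C.G (C.Jmap x) (C.Jmap y)

lemma NX_swap (x y : Niln C.G) (h : C.NX x y = 0) : C.NX y x = 0 :=
  nijenhuis_swap C.G C.Jmap x y h

lemma NX_diag (x : Niln C.G) : C.NX x x = 0 :=
  nijenhuis_diag C.G C.Jmap x

/-- Nijenhuis vanishing: two paired vertices in different pairs. -/
lemma nij_pp (v w : Fin C.M) (hv : (v : ℕ) < 2 * C.q) (hw : (w : ℕ) < 2 * C.q)
    (hvw : (v : ℕ) / 2 < (w : ℕ) / 2) : C.NX (vtx C.G v) (vtx C.G w) = 0 := by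
  have hq := C.hq
  have hcM := C.hcM
  have htvq : τ (v : ℕ) < 2 * C.q := by
    rcases tau_cases (v : ℕ) with ⟨h1, e1⟩ | ⟨h1, e1⟩ <;> omega
  have htwq : τ (w : ℕ) < 2 * C.q := by
    rcases tau_cases (w : ℕ) with ⟨h1, e1⟩ | ⟨h1, e1⟩ <;> omega
  have htvM : τ (v : ℕ) < C.M := by omega
  have htwM : τ (w : ℕ) < C.M := by omega
  set tv : Fin C.M := ⟨τ (v : ℕ), htvM⟩ with htv_def
  set tw : Fin C.M := ⟨τ (w : ℕ), htwM⟩ with htw_def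
  have hJv : C.Jmap (vtx C.G v) = σv (v : ℕ) • vtx C.G tv := C.Jvtx_paired v tv hv rfl
  have hJw : C.Jmap (vtx C.G w) = σv (w : ℕ) • vtx C.G tw := C.Jvtx_paired w tw hw rfl
  have hvt2 : (tv : ℕ) / 2 = (v : ℕ) / 2 := by
    rcases tau_cases (v : ℕ) with ⟨h1, e1⟩ | ⟨h1, e1⟩ <;>
      simp only [htv_def] <;> omega
  have hwt2 : (tw : ℕ) / 2 = (w : ℕ) / 2 := by
    rcases tau_cases (w : ℕ) with ⟨h1, e1⟩ | ⟨h1, e1⟩ <;>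
      simp only [htw_def] <;> omega
  have hk1 : C.Jmap (bracketVtx C.G tv w) = σv (w : ℕ) • bracketVtx C.G tv tw :=
    C.key_cross tv w tw htvq hw (by omega) rfl
  have hk2 : C.Jmap (bracketVtx C.G v tw) = σv (tw : ℕ) • bracketVtx C.G v w :=
    C.key_cross v tw w hv htwq (by omega) ((tau_invol (w : ℕ)).symm)
  have hsgn : σv (w : ℕ) * σv (tw : ℕ) = -1 := sigv_mul_tau (w : ℕ)
  unfold NX
  rw [hJv, hJw]
  simp only [bracket_smul_left, bracket_smul_right, bracket_vtx_vtx, map_add, map_smul,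
    hk1, hk2, smul_smul, hsgn, neg_one_smul]
  match_scalars <;> ring

/-- Nijenhuis vanishing: two vertices in the same pair. -/
lemma nij_same (v w : Fin C.M) (hv : (v : ℕ) < 2 * C.q) (hw : (w : ℕ) < 2 * C.q)
    (hvw : (v : ℕ) / 2 = (w : ℕ) / 2) : C.NX (vtx C.G v) (vtx C.G w) = 0 := by
  by_cases hvw2 : v = w
  · rw [hvw2]; exact C.NX_diag _
  · have hne : (v : ℕ) ≠ (w : ℕ) := fun h => hvw2 (Fin.ext h)
    have hwv : (w : ℕ) = τ (v : ℕ) ∨ (v : ℕ) = τ (w : ℕ) := by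
      rcases tau_cases (v : ℕ) with ⟨h1, e1⟩ | ⟨h1, e1⟩ <;>
      rcases tau_cases (w : ℕ) with ⟨h2, e2⟩ | ⟨h2, e2⟩ <;> omega
    have hwv2 : (w : ℕ) = τ (v : ℕ) ∧ (v : ℕ) = τ (w : ℕ) := by
      rcases hwv with h | h
      · exact ⟨h, by rw [h, tau_invol]⟩
      · exact ⟨by rw [h, tau_invol], h⟩
    have hJv : C.Jmap (vtx C.G v) = σv (v : ℕ) • vtx C.G w := C.Jvtx_paired v w hv hwv2.1
    have hJw : C.Jmap (vtx C.G w) = σv (w : ℕ) • vtx C.G v := C.Jvtx_paired w v hw hwv2.2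
    have hsgn : σv (v : ℕ) * σv (w : ℕ) = -1 := by
      rw [hwv2.1]; exact sigv_mul_tau (v : ℕ)
    unfold NX
    rw [hJv, hJw]
    simp only [bracket_smul_left, bracket_smul_right, bracket_vtx_vtx, map_add, map_smul,
      C.bracketVtx_self, smul_zero, add_zero, map_zero, smul_smul, hsgn, neg_one_smul,
      bracketVtx_antisymm C.G v w, neg_neg, smul_neg]
    match_scalars <;> linear_combination hsgn

/-- Nijenhuis vanishing: paired vertex and the vertex `s`. -/
lemma nij_ps (v w : Fin C.M) (hv : (v : ℕ) < 2 * C.q) (hw : (w : ℕ) = 2 * C.q)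
    (hc : C.c % 2 = 1) : C.NX (vtx C.G v) (vtx C.G w) = 0 := by
  have hq := C.hq
  have hr := C.hr
  have hcM := C.hcM
  have htvq : τ (v : ℕ) < 2 * C.q := by
    rcases tau_cases (v : ℕ) with ⟨h1, e1⟩ | ⟨h1, e1⟩ <;> omega
  have htvM : τ (v : ℕ) < C.M := by omega
  set tv : Fin C.M := ⟨τ (v : ℕ), htvM⟩ with htv_def
  have hJv : C.Jmap (vtx C.G v) = σv (v : ℕ) • vtx C.G tv := C.Jvtx_paired v tv hv rfl
  have hbr1 : 2 * (C.q - 1) < 2 * (C.q - 1) + 1 := by omega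
  have hbr2 : 2 * (C.q - 1) + 1 < C.c := by omega
  have hJw : C.Jmap (vtx C.G w) = edg C.G (C.mkE (2 * (C.q - 1)) (2 * (C.q - 1) + 1) hbr1 hbr2) :=
    C.Jvtx_s w hw hc hbr1 hbr2
  have hkey : C.Jmap (bracketVtx C.G tv w) = σv (tv : ℕ) • bracketVtx C.G v w :=
    C.key_s tv v w htvq hw hc ((tau_invol (v : ℕ)).symm)
  have hsgn : σv (v : ℕ) * σv (tv : ℕ) = -1 := sigv_mul_tau (v : ℕ)
  unfold NX
  rw [hJv, hJw]
  simp only [bracket_smul_left, bracket_smul_right, bracket_vtx_vtx, bracket_edg_right,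
    map_add, map_smul, hkey, smul_zero, add_zero, map_zero, smul_smul, hsgn, neg_one_smul]
  abel

/-- Nijenhuis vanishing: any vertex paired with the isolated vertex `t`. -/
lemma nij_pt (v w : Fin C.M) (hw : (w : ℕ) = C.c) : C.NX (vtx C.G v) (vtx C.G w) = 0 := by
  have hq := C.hq
  have hr := C.hr
  have hMc := C.hMc
  have hM : C.c < C.M := by have := w.isLt; omega
  have hbr1 : 2 * C.r < 2 * C.r + 1 := by omega
  have hbr2 : 2 * C.r + 1 < C.c := by omega
  have hJw : C.Jmap (vtx C.G w) = edg C.G (C.mkE (2 * C.r) (2 * C.r + 1) hbr1 hbr2) :=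
    C.Jvtx_t w hw hbr1 hbr2
  unfold NX
  rcases C.Jvtx_shape v with ⟨tv, htv, htvq, hvq, hJv⟩ | ⟨E, hJv⟩ <;>
    rw [hJv, hJw] <;>
    simp only [bracket_smul_left, bracket_smul_right, bracket_vtx_vtx, bracket_edg_left,
      bracket_edg_right, C.bracketVtx_t_right v w hw, C.bracketVtx_t_right _ w hw,
      smul_zero, add_zero, zero_add, map_zero, sub_zero, neg_zero] <;>
    abel

/-- Nijenhuis vanishing on two vertex generators. -/
lemma nij_vtx (v w : Fin C.M) : C.NX (vtx C.G v) (vtx C.G w) = 0 := by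
  rcases C.vtx_cases v with hv | ⟨hv, hcv⟩ | ⟨hv, hMv⟩
  · rcases C.vtx_cases w with hw | ⟨hw, hcw⟩ | ⟨hw, hMw⟩
    · rcases lt_trichotomy ((v : ℕ) / 2) ((w : ℕ) / 2) with h | h | h
      · exact C.nij_pp v w hv hw h
      · exact C.nij_same v w hv hw h
      · exact C.NX_swap _ _ (C.nij_pp w v hw hv h)
    · exact C.nij_ps v w hv hw hcw
    · exact C.nij_pt v w hw
  · rcases C.vtx_cases w with hw | ⟨hw, hcw⟩ | ⟨hw, hMw⟩
    · exact C.NX_swap _ _ (C.nij_ps w v hw hv hcv)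
    · have : v = w := Fin.ext (by omega)
      rw [this]; exact C.NX_diag _
    · exact C.nij_pt v w hw
  · rcases C.vtx_cases w with hw | ⟨hw, hcw⟩ | ⟨hw, hMw⟩
    · exact C.NX_swap _ _ (C.nij_pt w v hv)
    · exact C.NX_swap _ _ (C.nij_pt w v hv)
    · exact C.nij_pt v w hw

/-- Nijenhuis vanishing with an edge generator on the left. -/
lemma nij_edge (e : C.G.edgeSet) (b : Fin C.M ⊕ C.G.edgeSet) :
    C.NX (edg C.G e) (basisVec C.G b) = 0 := by
  have hq := C.hq
  have hr := C.hr
  have hMc := C.hMc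
  have hcM := C.hcM
  rcases C.Jedg_shape e with ⟨a, e', hJe⟩ | ⟨u, hu, hJe⟩
  · unfold NX
    rw [hJe]
    simp only [bracket_edg_left, bracket_smul_left, smul_zero, map_zero, add_zero,
      zero_add, sub_zero, zero_sub, neg_zero]
  · -- `J (edg e) = - vtx u` with `u` the vertex `s` or `t`
    have key : C.Jmap (bracket C.G (vtx C.G u) (basisVec C.G b))
        = bracket C.G (vtx C.G u) (C.Jmap (basisVec C.G b)) := by
      rcases b with w | e'
      · show C.Jmap (bracket C.G (vtx C.G u) (vtx C.G w))
          = bracket C.G (vtx C.G u) (C.Jmap (vtx C.G w))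
        rw [bracket_vtx_vtx]
        rcases hu with hu | ⟨hu, hcodd⟩
        · rw [C.bracketVtx_t_left u w hu, map_zero]
          rcases C.Jvtx_shape w with ⟨tw, _, _, _, hJw⟩ | ⟨E, hJw⟩
          · rw [hJw, bracket_smul_right, bracket_vtx_vtx, C.bracketVtx_t_left u tw hu,
              smul_zero]
          · rw [hJw, bracket_edg_right]
        · rcases C.vtx_cases w with hw | ⟨hw, hcw⟩ | ⟨hw, hMw⟩
          · -- w paired
            have htwq : τ (w : ℕ) < 2 * C.q := by
              rcases tau_cases (w : ℕ) with ⟨h1, e1⟩ | ⟨h1, e1⟩ <;> omega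
            have htwM : τ (w : ℕ) < C.M := by omega
            set tw : Fin C.M := ⟨τ (w : ℕ), htwM⟩ with htw_def
            have hJw : C.Jmap (vtx C.G w) = σv (w : ℕ) • vtx C.G tw :=
              C.Jvtx_paired w tw hw rfl
            rw [bracketVtx_antisymm C.G w u, map_neg, C.key_s w tw u hw hu hcodd rfl, hJw,
              bracket_smul_right, bracket_vtx_vtx, bracketVtx_antisymm C.G tw u, smul_neg]
          · -- w = s = u
            have huw : u = w := Fin.ext (by omega)
            have hbr1 : 2 * (C.q - 1) < 2 * (C.q - 1) + 1 := by omega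
            have hbr2 : 2 * (C.q - 1) + 1 < C.c := by omega
            have hJw := C.Jvtx_s w hw hcw hbr1 hbr2
            rw [huw, C.bracketVtx_self, map_zero, hJw, bracket_edg_right]
          · -- w = t
            have hbr1 : 2 * C.r < 2 * C.r + 1 := by omega
            have hbr2 : 2 * C.r + 1 < C.c := by
              have := w.isLt; omega
            have hJw := C.Jvtx_t w hw hbr1 hbr2
            rw [C.bracketVtx_t_right u w hw, map_zero, hJw, bracket_edg_right]
      · show C.Jmap (bracket C.G (vtx C.G u) (edg C.G e'))
          = bracket C.G (vtx C.G u) (C.Jmap (edg C.G e'))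
        rw [bracket_edg_right, map_zero]
        rcases C.Jedg_shape e' with ⟨a', e'', hJ⟩ | ⟨u', hu', hJ⟩
        · rw [hJ, bracket_smul_right, bracket_edg_right, smul_zero]
        · rw [hJ, bracket_neg_right, bracket_vtx_vtx]
          rcases hu' with hu' | ⟨hu', hcodd'⟩
          · rw [C.bracketVtx_t_right u u' hu', neg_zero]
          · rcases hu with hu | ⟨hu, hcodd⟩
            · rw [C.bracketVtx_t_left u u' hu, neg_zero]
            · have : u = u' := Fin.ext (by omega)
              rw [this, C.bracketVtx_self, neg_zero]
    unfold NX
    rw [hJe, bracket_edg_left, bracket_neg_left, bracket_edg_left, bracket_neg_left,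
      map_add, map_zero, add_zero, map_neg, key]
    abel

lemma nij_basis (b b' : Fin C.M ⊕ C.G.edgeSet) :
    C.NX (basisVec C.G b) (basisVec C.G b') = 0 := by
  rcases b with v | e
  · rcases b' with w | e'
    · exact C.nij_vtx v w
    · exact C.NX_swap _ _ (C.nij_edge e' (Sum.inl v))
  · exact C.nij_edge e b'

/-- The adapted complex structure on `C.G`. -/
noncomputable def adapted : AdaptedCS C.G where
  J := C.Jmap
  j_squared := mkJ_squared C.G C.ff C.sg C.ff_invol C.sg_mul
  integrable := by
    refine integrable_of_basis C.G C.Jmap (fun b b' => ?_)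
    have h := C.nij_basis b b'
    unfold NX at h
    exact h
  adapted := by
    intro b
    rcases C.sg_pm b with h | h
    · exact Or.inl ⟨C.ff b, by rw [C.Jmap_basis b, h, one_smul]⟩
    · exact Or.inr ⟨C.ff b, by rw [C.Jmap_basis b, h, neg_one_smul]⟩

end Nij

end Ctx


/-- Context for the complete graph `K_m` (with `m ≡ 0, 3 mod 4`). -/
noncomputable def ctxTop (m q r : ℕ) (hq : m = 2 * q + m % 2) (hr : q = r + m % 2)
    (hre : r % 2 = 0) : Ctx where
  M := m
  c := m
  q := q
  r := r
  G := ⊤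
  dec := by infer_instance
  hadj := by
    intro i j
    rw [SimpleGraph.top_adj]
    exact ⟨fun h => ⟨h, i.isLt, j.isLt⟩, fun h => h.1⟩
  hcM := le_refl m
  hMc := Nat.le_succ m
  hq := hq
  hr := by omega
  hre := hre

/-- Context for `K_m` plus an isolated vertex (with `m ≡ 1, 2 mod 4`). -/
noncomputable def ctxStar (m q r : ℕ) (hq : m = 2 * q + m % 2) (hr : q = r + m % 2 + 1)
    (hre : r % 2 = 0) : Ctx where
  M := m + 1
  c := m
  q := q
  r := r
  G := completeStar m
  dec := by infer_instance
  hadj := fun i j => Iff.rfl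
  hcM := Nat.le_succ m
  hMc := le_refl (m + 1)
  hq := hq
  hr := by omega
  hre := hre


end GraphLie

/-- For every positive integer `n`, the complete graphs `K_{4n}` and
`K_{4n+3}` admit adapted complex structures, and the graphs `(K_{4n+1})_*` and
`(K_{4n+2})_*` (complete graphs with one extra isolated vertex) admit adapted complex
structures. -/
theorem statement17 (n : ℕ) (hn : 0 < n) :
    Nonempty (GraphLie.AdaptedCS (⊤ : SimpleGraph (Fin (4 * n)))) ∧
    Nonempty (GraphLie.AdaptedCS (⊤ : SimpleGraph (Fin (4 * n + 3)))) ∧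
    Nonempty (GraphLie.AdaptedCS (completeStar (4 * n + 1))) ∧
    Nonempty (GraphLie.AdaptedCS (completeStar (4 * n + 2))) := by
  refine ⟨⟨?_⟩, ⟨?_⟩, ⟨?_⟩, ⟨?_⟩⟩
  · exact (GraphLie.ctxTop (4 * n) (2 * n) (2 * n) (by omega) (by omega) (by omega)).adapted
  · exact (GraphLie.ctxTop (4 * n + 3) (2 * n + 1) (2 * n) (by omega) (by omega)
      (by omega)).adapted
  · exact (GraphLie.ctxStar (4 * n + 1) (2 * n) (2 * n - 2) (by omega) (by omega)
      (by omega)).adapted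
  · exact (GraphLie.ctxStar (4 * n + 2) (2 * n + 1) (2 * n) (by omega) (by omega)
      (by omega)).adapted
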